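/- arXiv:1012.2878 — 2 statements merged into one kernel-verified Lean document; each statement's English description precedes it below -/
import Mathlib

section
/- Let G be a cubic bridgeless graph and let X ⊆ V(G) be such that |δ(X)| = 4 and the induced subgraph G|X has at least 2 perfect matchings. Then X is a burl. -/
open SimpleGraph

/-- `E_X`: the set of edges of `G` with at least one endpoint in `X`. -/
def edgesOn {V : Type*} (G : SimpleGraph V) (X : Set V) : Set (Sym2 V) :=
  {e | e ∈ G.edgeSet ∧ ∃ v ∈ X, v ∈ e}

/-- `δ(X)`: the set of edges of `G` with exactly one endpoint in `X`. -/
def cutEdges {V : Type*} (G : SimpleGraph V) (X : Set V) : Set (Sym2 V) :=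
  {e | e ∈ G.edgeSet ∧ ∃ u v, e = s(u, v) ∧ u ∈ X ∧ v ∉ X}

/-- `M ∈ M(G,X)`: `M` is a subset of `E_X` such that every vertex of `X` is incident
with exactly one edge of `M`. -/
def MatchOn {V : Type*} (G : SimpleGraph V) (X : Set V) (M : Finset (Sym2 V)) : Prop :=
  ↑M ⊆ edgesOn G X ∧ ∀ v ∈ X, ∃! e, e ∈ M ∧ v ∈ e

/-- `p` is a balanced probability distribution on `M(G,X)`: a nonnegative function,
supported on `M(G,X)`, summing to `1`, such that each edge of `E_X` belongs to the
random element with probability exactly `1/3`. -/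
def IsBalanced {V : Type*} [Fintype V] [DecidableEq V] (G : SimpleGraph V) (X : Set V)
    (p : Finset (Sym2 V) → ℝ) : Prop :=
  (∀ M, 0 ≤ p M) ∧ (∀ M, p M ≠ 0 → MatchOn G X M) ∧ (∑ M, p M = 1) ∧
    ∀ e ∈ edgesOn G X, (∑ M, if e ∈ M then p M else 0) = 1 / 3

/-- `a(G,X,M)`: the maximum number of pairwise (vertex-)disjoint `M`-alternating cycles
in `G|X`, where a cycle of `G|X` (i.e., a cycle of `G` all of whose vertices lie in `X`)
is `M`-alternating if it has even length and exactly half of its edges belong to `M`. -/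
noncomputable def altCycleCount {V : Type*} [DecidableEq V] (G : SimpleGraph V)
    (X : Set V) (M : Finset (Sym2 V)) : ℕ :=
  sSup {k | ∃ f : Fin k → Σ v : V, G.Walk v v,
    (∀ i, (f i).2.IsCycle ∧ (∀ u ∈ (f i).2.support, u ∈ X) ∧ Even (f i).2.length ∧
      2 * ((f i).2.edges.filter (fun e => decide (e ∈ M))).length = (f i).2.length) ∧
    (∀ i j, i ≠ j → ∀ u ∈ (f i).2.support, u ∉ (f j).2.support)}

/-- `X` is a burl in `G` if for every balanced probability distribution on `M(G,X)`,
the expected maximum number of disjoint alternating cycles is at least `1/3`. -/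
def IsBurl {V : Type*} [Fintype V] [DecidableEq V] (G : SimpleGraph V) (X : Set V) :
    Prop :=
  ∀ p : Finset (Sym2 V) → ℝ, IsBalanced G X p →
    (1 : ℝ) / 3 ≤ ∑ M, p M * (altCycleCount G X M : ℝ)

/-!
Since `G|X` has a perfect matching, `|X|` is even, so counting the ends in `X` of the edges of
any `M ∈ M(G,X)` shows that `M` uses an even number of the four edges of `δ(X)`. A balanced
distribution puts each of these edges into `M` with probability `1/3`, so on average `M` uses
`4/3` of them, and by parity `M` avoids `δ(X)` with probability at least `1 - (4/3)/2 = 1/3`.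
Such an `M` is a perfect matching of `G|X`; one of the two given perfect matchings differs from
it, and the symmetric difference of the two contains a cycle alternating between them, which is
an `M`-alternating cycle of `G|X`.
-/

theorem List.two_mul_countP_eq_length_of_isChain {α : Type*} (p : α → Bool) :
    ∀ (a z : α) (l : List α), p a = p z →
      (a :: l ++ [z]).IsChain (fun x y => p x ≠ p y) →
      2 * (a :: l).countP p = (a :: l).length
  | a, z, [], haz, h => by simp_all
  | a, z, [b], haz, h => by
    simp only [cons_append, nil_append, isChain_cons_cons] at h
    cases ha : p a <;> simp_all
  | a, z, b :: c :: l, haz, h => by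
    simp only [cons_append, isChain_cons_cons] at h
    obtain ⟨hab, hbc, h⟩ := h
    have hb : p b = !p a := Bool.eq_not_of_ne hab.symm
    have hc : p c = p a := by rw [Bool.eq_not_of_ne hbc.symm, hb, Bool.not_not]
    have ih := two_mul_countP_eq_length_of_isChain p c z l (hc.trans haz) (by simpa using h)
    simp only [countP_cons, length_cons, hb, hc] at ih ⊢
    cases hpa : p a <;> simp [hpa] at ih ⊢ <;> omega

namespace SimpleGraph

variable {V : Type*} {G G' : SimpleGraph V}

theorem IsAlternating.mem_edgeSet_iff_of_dartAdj (halt : G.IsAlternating G') {d d' : G.Dart}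
    (hdd' : G.DartAdj d d') (hne : d.edge ≠ d'.edge) :
    d.edge ∈ G'.edgeSet ↔ d'.edge ∉ G'.edgeSet := by
  obtain ⟨⟨a, x⟩, hax⟩ := d
  obtain ⟨⟨y, b⟩, hyb⟩ := d'
  simp only [DartAdj] at hdd'
  subst hdd'
  have hab : a ≠ b := by rintro rfl; simp at hne
  simpa [G'.adj_comm a] using halt hab hax.symm hyb

theorem Walk.IsCycle.two_mul_countP_edges_eq_length (halt : G.IsAlternating G')
    [DecidablePred (· ∈ G'.edgeSet)] {u : V} {c : G.Walk u u} (hc : c.IsCycle) :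
    2 * c.edges.countP (· ∈ G'.edgeSet) = c.length := by
  cases c with
  | nil => exact (Walk.not_isCycle_nil hc).elim
  | @cons _ w _ h p =>
    obtain ⟨hp, hup⟩ := (Walk.cons_isCycle_iff p h).mp hc
    have hpne : p.edges ≠ [] := by
      intro hnil
      cases p with
      | nil => exact h.ne rfl
      | cons => simp at hnil
    -- Repeating the first edge at the end makes the alternation at `u` a chain condition.
    have hdist : (s(u, w) :: p.edges ++ [s(u, w)]).IsChain (· ≠ ·) := by
      rw [List.cons_append, List.isChain_cons]
      refine ⟨fun e he => ?_, List.Pairwise.isChain ?_⟩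
      · rintro rfl
        rw [List.head?_append_of_ne_nil _ hpne] at he
        exact hup (List.mem_of_mem_head? he)
      · refine List.nodup_append.mpr ⟨hp.isTrail.edges_nodup, List.nodup_singleton _, ?_⟩
        rintro e he _ hmem rfl
        exact hup (List.mem_singleton.mp hmem ▸ he)
    have hdarts : ((Walk.cons h p).concat h).darts.map Dart.edge =
        s(u, w) :: p.edges ++ [s(u, w)] := by
      simp [Walk.darts_concat, Walk.edges]
    have halt' : (s(u, w) :: p.edges ++ [s(u, w)]).IsChain
        (fun x y => decide (x ∈ G'.edgeSet) ≠ decide (y ∈ G'.edgeSet)) := by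
      have hadj := ((Walk.cons h p).concat h).isChain_dartAdj_darts
      rw [← hdarts, List.isChain_map] at hdist ⊢
      rw [List.isChain_iff_getElem] at hadj hdist ⊢
      intro i hi
      have := halt.mem_edgeSet_iff_of_dartAdj (hadj i hi) (hdist i hi)
      simp only [ne_eq, decide_eq_decide]
      tauto
    simpa using List.two_mul_countP_eq_length_of_isChain _ _ _ _ rfl halt'

open scoped symmDiff in
theorem Subgraph.IsPerfectMatching.exists_isCycle_symmDiff [Finite V] {M : G.Subgraph}
    {M' : G'.Subgraph} (hM : M.IsPerfectMatching) (hM' : M'.IsPerfectMatching)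
    (hne : M.spanningCoe ≠ M'.spanningCoe) [DecidablePred (· ∈ M'.spanningCoe.edgeSet)] :
    ∃ (u : V) (c : (M.spanningCoe ∆ M'.spanningCoe).Walk u u), c.IsCycle ∧
      2 * c.edges.countP (· ∈ M'.spanningCoe.edgeSet) = c.length := by
  obtain ⟨u, w, huw⟩ := ne_bot_iff_exists_adj.mp (symmDiff_eq_bot.not.mpr hne)
  obtain ⟨c, hc, -⟩ :=
    (hM.symmDiff_isCycles hM').exists_cycle_toSubgraph_verts_eq_connectedComponentSupp
      ((ConnectedComponent.mem_supp_iff _ u).mpr rfl) ⟨w, huw⟩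
  exact ⟨u, c, hc, hc.two_mul_countP_edges_eq_length (hM.isAlternating_symmDiff_right hM')⟩

end SimpleGraph

open scoped Finset

section

variable {V : Type*} {G : SimpleGraph V} {X : Set V} {M : Finset (Sym2 V)}

theorem cutEdges_subset_edgesOn : cutEdges G X ⊆ edgesOn G X := by
  rintro e ⟨he, u, v, rfl, hu, -⟩
  exact ⟨he, u, hu, Sym2.mem_mk_left u v⟩

theorem IsBalanced.sum_mul_card_inter [Fintype V] [DecidableEq V] {p : Finset (Sym2 V) → ℝ}
    (hp : IsBalanced G X p) {C : Finset (Sym2 V)} (hC : ↑C ⊆ edgesOn G X) :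
    ∑ M, p M * #(M ∩ C) = #C / 3 := by
  obtain ⟨-, -, -, hbal⟩ := hp
  calc ∑ M, p M * #(M ∩ C) = ∑ M, ∑ e ∈ C, if e ∈ M then p M else 0 := by
        refine Finset.sum_congr rfl fun M _ => ?_
        rw [← Finset.sum_filter, Finset.sum_const, nsmul_eq_mul, mul_comm,
          Finset.filter_mem_eq_inter, Finset.inter_comm]
    _ = ∑ e ∈ C, ∑ M, if e ∈ M then p M else 0 := Finset.sum_comm
    _ = ∑ e ∈ C, (1 : ℝ) / 3 := Finset.sum_congr rfl fun e he => hbal e (hC he)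
    _ = #C / 3 := by rw [Finset.sum_const, nsmul_eq_mul, mul_one_div]

theorem card_filter_mem_add_ite_mem_eq_two [Fintype V] [DecidableEq V] [DecidablePred (· ∈ X)]
    {C : Finset (Sym2 V)} (hC : ↑C = cutEdges G X) {e : Sym2 V} (he : e ∈ edgesOn G X) :
    #{x ∈ X.toFinset | x ∈ e} + (if e ∈ C then 1 else 0) = 2 := by
  obtain ⟨he, x, hx, hxe⟩ := he
  obtain ⟨y, rfl⟩ := Sym2.mem_iff_exists.mp hxe
  have hxy : x ≠ y := ((mem_edgeSet G).mp he).ne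
  by_cases hy : y ∈ X
  · have hnC : s(x, y) ∉ C := by
      rw [← Finset.mem_coe, hC]
      rintro ⟨-, u, w, huw, hu, hw⟩
      rcases Sym2.eq_iff.mp huw with ⟨rfl, rfl⟩ | ⟨rfl, rfl⟩ <;> contradiction
    have hends : ({z ∈ X.toFinset | z ∈ s(x, y)} : Finset V) = {x, y} := by
      ext z
      simp only [Finset.mem_filter, Set.mem_toFinset, Sym2.mem_iff, Finset.mem_insert,
        Finset.mem_singleton]
      constructor
      · exact fun h => h.2
      · rintro (rfl | rfl) <;> simp_all
    rw [hends, if_neg hnC, Finset.card_pair hxy]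
  · have hxyC : s(x, y) ∈ C := by
      rw [← Finset.mem_coe, hC]
      exact ⟨he, x, y, rfl, hx, hy⟩
    have hends : ({z ∈ X.toFinset | z ∈ s(x, y)} : Finset V) = {x} := by
      ext z
      simp only [Finset.mem_filter, Set.mem_toFinset, Sym2.mem_iff, Finset.mem_singleton]
      constructor
      · rintro ⟨hz, rfl | rfl⟩
        · rfl
        · contradiction
      · rintro rfl
        exact ⟨hx, Or.inl rfl⟩
    rw [hends, if_pos hxyC, Finset.card_singleton]

theorem MatchOn.even_card_inter [Fintype V] [DecidableEq V] (hM : MatchOn G X M)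
    (hX : Even X.ncard) {C : Finset (Sym2 V)} (hC : ↑C = cutEdges G X) : Even #(M ∩ C) := by
  classical
  have hcover : #X.toFinset = ∑ e ∈ M, #{x ∈ X.toFinset | x ∈ e} := by
    have hdouble := Finset.sum_card_bipartiteAbove_eq_sum_card_bipartiteBelow
      (s := X.toFinset) (t := M) (fun x e => x ∈ e)
    simp only [Finset.bipartiteAbove, Finset.bipartiteBelow] at hdouble
    rw [← hdouble, Finset.card_eq_sum_ones]
    refine Finset.sum_congr rfl fun x hx => ?_
    obtain ⟨e, he, huniq⟩ := hM.2 x (Set.mem_toFinset.mp hx)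
    refine (Finset.card_eq_one.mpr ⟨e, ?_⟩).symm
    ext e'
    simp only [Finset.mem_filter, Finset.mem_singleton]
    exact ⟨fun h => huniq e' h, fun h => h ▸ he⟩
  have hcut : #(M ∩ C) = ∑ e ∈ M, if e ∈ C then 1 else 0 := by
    rw [← Finset.filter_mem_eq_inter, Finset.card_filter]
  have hsum : X.ncard + #(M ∩ C) = 2 * #M := by
    rw [Set.ncard_eq_toFinset_card', hcover, hcut, ← Finset.sum_add_distrib,
      Finset.sum_congr rfl fun e he => card_filter_mem_add_ite_mem_eq_two hC (hM.1 he),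
      Finset.sum_const, smul_eq_mul, mul_comm]
  exact (Nat.even_add.mp (hsum ▸ even_two_mul _)).mp hX

theorem MatchOn.isPerfectMatching_top (hM : MatchOn G X M)
    (hMX : Disjoint (↑M) (cutEdges G X)) :
    (⊤ : ((fromEdgeSet (M : Set (Sym2 V))).induce X).Subgraph).IsPerfectMatching := by
  rw [Subgraph.isPerfectMatching_iff]
  intro v
  obtain ⟨e, ⟨heM, hve⟩, huniq⟩ := hM.2 v v.2
  obtain ⟨w, rfl⟩ := Sym2.mem_iff_exists.mp hve
  have hvw : G.Adj v w := (hM.1 heM).1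
  have hw : w ∈ X := by
    by_contra hw
    exact Set.disjoint_left.mp hMX heM ⟨hvw, v, w, rfl, v.2, hw⟩
  refine ⟨⟨w, hw⟩, ⟨heM, hvw.ne⟩, fun y hy => Subtype.ext ?_⟩
  exact Sym2.congr_right.mp (huniq s(v, y) ⟨hy.1, Sym2.mem_mk_left _ _⟩)

theorem one_le_altCycleCount_of_isCycle [Fintype V] [DecidableEq V] {x : V} {c : G.Walk x x}
    (hc : c.IsCycle) (hcX : ∀ u ∈ c.support, u ∈ X)
    (hcM : 2 * (c.edges.filter (fun e => decide (e ∈ M))).length = c.length) :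
    1 ≤ altCycleCount G X M := by
  refine le_csSup ⟨Fintype.card V, ?_⟩ ?_
  · rintro k ⟨f, -, hdisj⟩
    have hinj : Function.Injective (fun i : Fin k => (f i).1) := by
      intro i j hij
      by_contra hne
      refine hdisj i j hne _ (Walk.start_mem_support _) ?_
      rw [show (f i).1 = (f j).1 from hij]
      exact Walk.start_mem_support _
    simpa using Fintype.card_le_of_injective _ hinj
  · exact ⟨fun _ => ⟨x, c⟩, fun _ => ⟨hc, hcX, ⟨_, hcM.symm.trans (two_mul _)⟩, hcM⟩,
      fun i j hij => absurd (Subsingleton.elim i j) hij⟩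

theorem one_le_altCycleCount_of_isCycle_of_le_induce [Fintype V] [DecidableEq V]
    {H : SimpleGraph X} (hH : H ≤ G.induce X) {x : X} {c : H.Walk x x} (hc : c.IsCycle)
    (hcM : 2 * c.edges.countP (fun e => decide (e.map Subtype.val ∈ M)) = c.length) :
    1 ≤ altCycleCount G X M := by
  let f : H →g G := (Embedding.induce X).toHom.comp (Hom.ofLE hH)
  have hf : Function.Injective f := Subtype.val_injective
  refine one_le_altCycleCount_of_isCycle (c := c.map f)
    ((Walk.isCycle_map_iff_of_injective hf).mpr hc) ?_ ?_
  · intro u hu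
    rw [Walk.support_map, List.mem_map] at hu
    obtain ⟨v, -, rfl⟩ := hu
    exact v.2
  · rw [← List.countP_eq_length_filter, Walk.edges_map, List.countP_map, Walk.length_map]
    exact hcM

open scoped symmDiff in
theorem MatchOn.one_le_altCycleCount [Fintype V] [DecidableEq V] (hM : MatchOn G X M)
    (hMX : Disjoint (↑M) (cutEdges G X)) {P₁ P₂ : (G.induce X).Subgraph}
    (hP₁ : P₁.IsPerfectMatching) (hP₂ : P₂.IsPerfectMatching) (hne : P₁ ≠ P₂) :
    1 ≤ altCycleCount G X M := by
  classical
  set MX := (fromEdgeSet (M : Set (Sym2 V))).induce X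
  obtain ⟨P, hP, hPM⟩ : ∃ P : (G.induce X).Subgraph,
      P.IsPerfectMatching ∧ P.spanningCoe ≠ (⊤ : MX.Subgraph).spanningCoe := by
    by_contra! h
    have hAdj : P₁.Adj = P₂.Adj := Subgraph.spanningCoe_inj.mp ((h P₁ hP₁).trans (h P₂ hP₂).symm)
    refine hne (Subgraph.ext ?_ hAdj)
    rw [Subgraph.isSpanning_iff.mp hP₁.2, Subgraph.isSpanning_iff.mp hP₂.2]
  obtain ⟨u, c, hc, hcount⟩ := hP.exists_isCycle_symmDiff (hM.isPerfectMatching_top hMX) hPM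
  have hle : P.spanningCoe ∆ (⊤ : MX.Subgraph).spanningCoe ≤ G.induce X := by
    refine symmDiff_le_sup.trans (sup_le P.spanningCoe_le ?_)
    intro a b hab
    simp only [Subgraph.spanningCoe_top, MX, comap_adj, Function.Embedding.subtype_apply,
      fromEdgeSet_adj] at hab
    exact (hM.1 hab.1).1
  refine one_le_altCycleCount_of_isCycle_of_le_induce hle hc
    (hcount ▸ congrArg _ (List.countP_congr ?_))
  intro e he
  induction e using Sym2.ind with
  | h a b =>
    have hab : a ≠ b := ((mem_edgeSet _).mp (c.edges_subset_edgeSet he)).ne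
    rw [decide_eq_true_iff, decide_eq_true_iff]
    simp only [Subgraph.spanningCoe_top, mem_edgeSet, comap_adj, Function.Embedding.subtype_apply,
      fromEdgeSet_adj, Sym2.map_mk, Finset.mem_coe]
    exact (and_iff_left (Subtype.val_injective.ne hab)).symm

end

theorem one_sub_half_sum_mul_le_sum_mul {ι : Type*} [Fintype ι] {p : ι → ℝ}
    {q a : ι → ℕ} (hp0 : ∀ i, 0 ≤ p i) (hp1 : ∑ i, p i = 1) (hq : ∀ i, p i ≠ 0 → Even (q i))
    (ha : ∀ i, p i ≠ 0 → q i = 0 → 1 ≤ a i) :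
    1 - (∑ i, p i * q i) / 2 ≤ ∑ i, p i * a i := by
  rw [← hp1, Finset.sum_div, ← Finset.sum_sub_distrib]
  refine Finset.sum_le_sum fun i _ => ?_
  by_cases hpi : p i = 0
  · simp [hpi]
  by_cases hqi : q i = 0
  · have : (1 : ℝ) ≤ a i := by exact_mod_cast ha i hpi hqi
    simp only [hqi, CharP.cast_eq_zero, mul_zero, zero_div, sub_zero]
    nlinarith [hp0 i]
  · have : (2 : ℝ) ≤ q i := by
      obtain ⟨k, hk⟩ := hq i hpi
      exact_mod_cast (by omega : 2 ≤ q i)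
    nlinarith [hp0 i, (Nat.cast_nonneg (a i) : (0 : ℝ) ≤ a i)]

theorem statement9_general {V : Type*} [Fintype V] [DecidableEq V]
    (G : SimpleGraph V)
    (X : Set V)
    (hcut : (cutEdges G X).ncard = 4)
    (hpm : 2 ≤ {M : (G.induce X).Subgraph | M.IsPerfectMatching}.ncard) :
    IsBurl G X := by
  classical
  intro p hp
  obtain ⟨P₁, P₂, hP₁, hP₂, hne⟩ := (Set.one_lt_ncard_iff (Set.toFinite _)).mp hpm
  obtain ⟨C, hC⟩ := (Set.toFinite (cutEdges G X)).exists_finset_coe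
  have hC4 : #C = 4 := by rw [← Set.ncard_coe_finset, hC, hcut]
  have hX : Even X.ncard := by simpa [Set.ncard_eq_toFinset_card'] using hP₁.even_card
  have hE := hp.sum_mul_card_inter (hC ▸ cutEdges_subset_edgesOn)
  obtain ⟨hp0, hpM, hp1, -⟩ := hp
  have hdisj (M : Finset (Sym2 V)) (hMC : #(M ∩ C) = 0) : Disjoint (↑M) (cutEdges G X) := by
    rwa [← hC, Finset.disjoint_coe, Finset.disjoint_iff_inter_eq_empty, ← Finset.card_eq_zero]
  calc (1 : ℝ) / 3 = 1 - (∑ M, p M * #(M ∩ C)) / 2 := by rw [hE, hC4]; norm_num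
    _ ≤ ∑ M, p M * altCycleCount G X M :=
      one_sub_half_sum_mul_le_sum_mul hp0 hp1 (fun M hM => (hpM M hM).even_card_inter hX hC)
        fun M hM hMC => (hpM M hM).one_le_altCycleCount (hdisj M hMC) hP₁ hP₂ hne

theorem statement9 {V : Type*} [Fintype V] [DecidableEq V]
    (G : SimpleGraph V) [DecidableRel G.Adj]
    (hcubic : ∀ v : V, G.degree v = 3)
    (hconn : G.Connected)
    (hbridgeless : ∀ e ∈ G.edgeSet, ¬ G.IsBridge e)
    (X : Set V)
    (hcut : (cutEdges G X).ncard = 4)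
    (hpm : 2 ≤ {M : (G.induce X).Subgraph | M.IsPerfectMatching}.ncard) :
    IsBurl G X :=
  statement9_general G X hcut hpm
end

section
/- Let G be a cyclically 4-edge-connected cubic graph with |V(G)| ≥ 6, and let v1 v2 v3 v4 be a path in G (four distinct vertices with v1v2, v2v3, v3v4 edges of G). Let v1' be the neighbor of v2 other than v1 and v3, and let v4' be the neighbor of v3 other than v2 and v4. Suppose additionally that v1 is not adjacent to v4 and v1' is not adjacent to v4' in G. Let G' be the graph obtained from G by splitting along the path v1 v2 v3 v4: the vertex set of G' is V(G) \ {v2, v3}, and its edges are all edges of G not incident with v2 or v3, together with the two new edges v1v4 and v1'v4'. Then G' is cubic and bridgeless. -/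
/-!
Every nonempty proper vertex set `X'` of `G'` is left by at least two edges; together with a
direct degree count this gives the theorem.

The cubic graph `G` has no small cuts: counting degrees, `3|X| = 2 e(X) + |δ(X)|`, and a forest
has fewer edges than vertices, so if `G|X` is acyclic then `|δ(X)| ≥ |X| + 2`. So in a cut with
at most three edges, every side with at least two vertices contains a cycle; by cyclic
4-edge-connectivity, a cut with two vertices on each side has at least four edges, and every
nonempty proper cut has at least three.

Suppose `|δ'(X')| ≤ 1`. The two new edges cannot both cross, so, up to exchanging the roles of
`v1 v4` and `v1' v4'` and replacing `X'` by its complement, `v1, v4 ∈ X'`. Put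
`X = X' ∪ {v2, v3}`. An edge of `δ(X)` is either an old edge of `δ'(X')` other than `v1'v4'`,
or one of `v2v1'`, `v3v4'`. If `v1'v4'` crosses `X'`, it is the only edge of `δ'(X')`, so
`|δ(X)| ≤ 2`; if `v1', v4' ∈ X'`, then `|δ(X)| ≤ 1`; otherwise `|δ(X)| ≤ 3` while both
sides of `X` have two vertices. Each case contradicts the cut bounds for `G`.
-/

open SimpleGraph

/-- `G` is cyclically 4-edge-connected: it has no cyclic edge-cut of size less than 4,
where an edge-cut `δ(X)` is cyclic if both the subgraph induced on `X` and the subgraph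
induced on its complement contain a cycle. -/
def CyclicallyFourEdgeConnected {V : Type*} (G : SimpleGraph V) : Prop :=
  ∀ X : Set V, ¬ (G.induce X).IsAcyclic → ¬ (G.induce Xᶜ).IsAcyclic →
    4 ≤ (cutEdges G X).ncard

open Finset

theorem SimpleGraph.IsAcyclic.ncard_edgeSet_lt {V : Type*} {G : SimpleGraph V} [Finite V]
    [Nonempty V] (hG : G.IsAcyclic) : G.edgeSet.ncard < Nat.card V := by
  have := Fintype.ofFinite V
  obtain ⟨T, hGT, -, hT⟩ := connected_top.exists_isTree_le_of_le_of_isAcyclic le_top hG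
  classical
  rw [Nat.card_eq_fintype_card, ← hT.card_edgeFinset, Nat.lt_succ_iff,
    ← coe_edgeFinset, Set.ncard_coe_finset]
  exact card_le_card (edgeFinset_mono hGT)

section CutEdges

variable {V : Type*} {G : SimpleGraph V}

theorem mk_mem_cutEdges_iff {X : Set V} {u w : V} :
    s(u, w) ∈ cutEdges G X ↔ G.Adj u w ∧ ¬ (u ∈ X ↔ w ∈ X) := by
  constructor
  · rintro ⟨he, a, b, hab, ha, hb⟩
    refine ⟨he, ?_⟩
    rcases Sym2.eq_iff.1 hab with ⟨rfl, rfl⟩ | ⟨rfl, rfl⟩ <;> tauto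
  · rintro ⟨he, hX⟩
    by_cases hu : u ∈ X
    · exact ⟨he, u, w, rfl, hu, by tauto⟩
    · exact ⟨he, w, u, Sym2.eq_swap, by tauto, hu⟩

theorem cutEdges_compl (X : Set V) : cutEdges G Xᶜ = cutEdges G X := by
  ext e
  constructor
  · rintro ⟨he, u, v, rfl, hu, hv⟩
    exact ⟨he, v, u, Sym2.eq_swap, not_not.1 hv, hu⟩
  · rintro ⟨he, u, v, rfl, hu, hv⟩
    exact ⟨he, v, u, Sym2.eq_swap, hv, not_not.2 hu⟩

theorem cutEdges_setOf_reachable_subset (H : SimpleGraph V) (x : V) :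
    cutEdges G {z | H.Reachable x z} ⊆ G.edgeSet \ H.edgeSet := by
  rintro _ ⟨he, u, w, rfl, hu, hw⟩
  exact ⟨he, fun huw => hw (hu.trans (Adj.reachable huw))⟩

theorem SimpleGraph.connected_of_forall_cutEdges_nonempty [Nonempty V]
    (h : ∀ X : Set V, X.Nonempty → Xᶜ.Nonempty → (cutEdges G X).Nonempty) :
    G.Connected := by
  refine (connected_iff_exists_forall_reachable G).2 ⟨Classical.arbitrary V, fun y => ?_⟩
  by_contra hy
  obtain ⟨e, he⟩ := h {z | G.Reachable _ z} ⟨_, Reachable.refl _⟩ ⟨y, hy⟩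
  simpa using cutEdges_setOf_reachable_subset G _ he

theorem SimpleGraph.not_isBridge_of_forall_one_lt_ncard_cutEdges
    (h : ∀ X : Set V, X.Nonempty → Xᶜ.Nonempty → 1 < (cutEdges G X).ncard) (e : Sym2 V) :
    ¬ G.IsBridge e := by
  induction e with
  | _ x y =>
  intro hbr
  have hle : (cutEdges G {z | (G.deleteEdges {s(x, y)}).Reachable x z}).ncard ≤ 1 := by
    refine (Set.ncard_le_ncard (t := {s(x, y)}) fun f hf => ?_).trans (Set.ncard_singleton _).le
    have := cutEdges_setOf_reachable_subset _ x hf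
    rw [edgeSet_deleteEdges, sdiff_sdiff_right_self] at this
    exact this.2
  exact (h _ ⟨x, Reachable.refl _⟩ ⟨y, isBridge_iff.1 hbr⟩).not_ge hle

end CutEdges

section Counting

variable {V : Type*} [Fintype V] [DecidableEq V] (G : SimpleGraph V) [DecidableRel G.Adj]

theorem sum_card_neighborFinset_sdiff (X : Finset V) :
    ∑ v ∈ X, #(G.neighborFinset v \ X) = (cutEdges G X).ncard := by
  rw [← card_sigma, ← Set.ncard_coe_finset]
  refine Set.ncard_congr (fun p _ => s(p.1, p.2)) ?_ ?_ ?_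
  · rintro ⟨u, w⟩ hp
    simp only [coe_sigma, Set.mem_sigma_iff, mem_coe, mem_sdiff, mem_neighborFinset] at hp
    exact ⟨hp.2.1, u, w, rfl, hp.1, hp.2.2⟩
  · rintro ⟨u, w⟩ ⟨u', w'⟩ hp hp' h
    simp only [coe_sigma, Set.mem_sigma_iff, mem_coe, mem_sdiff] at hp hp'
    rcases Sym2.eq_iff.1 h with ⟨rfl, rfl⟩ | ⟨rfl, rfl⟩
    · rfl
    · exact absurd hp.1 hp'.2.2
  · rintro _ ⟨he, u, w, rfl, hu, hw⟩
    exact ⟨⟨u, w⟩, by simpa [hu, hw] using he, rfl⟩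

theorem sum_card_neighborFinset_inter (X : Finset V) :
    ∑ v ∈ X, #(G.neighborFinset v ∩ X) = 2 * (G.induce (X : Set V)).edgeSet.ncard := by
  rw [← coe_edgeFinset, Set.ncard_coe_finset, ← sum_degrees_eq_twice_card_edges,
    ← Finset.sum_coe_sort X]
  refine Finset.sum_congr rfl fun v _ => ?_
  rw [← card_neighborFinset_eq_degree, ← card_map (.subtype (· ∈ (X : Set V)))]
  congr 1
  ext w
  simp

theorem sum_degree_eq_two_mul_ncard_add_ncard_cutEdges (X : Finset V) :
    ∑ v ∈ X, G.degree v =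
      2 * (G.induce (X : Set V)).edgeSet.ncard + (cutEdges G X).ncard := by
  simp_rw [← sum_card_neighborFinset_inter, ← sum_card_neighborFinset_sdiff,
    ← sum_add_distrib, card_inter_add_card_sdiff, card_neighborFinset_eq_degree]

variable {G}

theorem eq_or_eq_or_eq_of_adj_of_degree_eq_three {v a b c w : V} (hv : G.degree v = 3)
    (ha : G.Adj v a) (hb : G.Adj v b) (hc : G.Adj v c) (hab : a ≠ b) (hac : a ≠ c)
    (hbc : b ≠ c) (hw : G.Adj v w) : w = a ∨ w = b ∨ w = c := by
  have hN : G.neighborFinset v = {a, b, c} := by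
    refine (eq_of_subset_of_card_le (by simp [insert_subset_iff, ha, hb, hc]) ?_).symm
    rw [card_neighborFinset_eq_degree, hv, card_insert_of_notMem (by simp [hab, hac]),
      card_pair hbc]
  simpa [hN] using (G.mem_neighborFinset v w).2 hw

theorem ncard_add_two_le_ncard_cutEdges (hcubic : ∀ v, G.degree v = 3) {X : Set V}
    (hX : X.Nonempty) (hac : (G.induce X).IsAcyclic) : X.ncard + 2 ≤ (cutEdges G X).ncard := by
  obtain ⟨X, rfl⟩ := X.toFinite.exists_finset_coe
  have hsum := sum_degree_eq_two_mul_ncard_add_ncard_cutEdges G X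
  have := hX.to_subtype
  have hforest := hac.ncard_edgeSet_lt
  simp only [hcubic, sum_const, smul_eq_mul, Nat.card_coe_set_eq, Set.ncard_coe_finset]
    at hsum hforest ⊢
  omega

theorem three_le_ncard_cutEdges_of_ncard_le_two (hcubic : ∀ v, G.degree v = 3) {X : Set V}
    (hX : X.Nonempty) (hX2 : X.ncard ≤ 2) : 3 ≤ (cutEdges G X).ncard := by
  have hac : (G.induce X).IsAcyclic := by
    refine IsAcyclic.of_card_le_two ?_
    rw [ENat.card_eq_coe_natCard, Nat.card_coe_set_eq]
    exact_mod_cast hX2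
  have := ncard_add_two_le_ncard_cutEdges hcubic hX hac
  have := hX.ncard_pos
  omega

theorem CyclicallyFourEdgeConnected.four_le_ncard_cutEdges
    (hcyc : CyclicallyFourEdgeConnected G) (hcubic : ∀ v, G.degree v = 3) {X : Set V}
    (hX : 2 ≤ X.ncard) (hXc : 2 ≤ Xᶜ.ncard) : 4 ≤ (cutEdges G X).ncard := by
  by_contra! h
  have hcyclic : ∀ Y : Set V, 2 ≤ Y.ncard → (cutEdges G Y).ncard < 4 →
      ¬ (G.induce Y).IsAcyclic := fun Y hY hc hac => by
    have := ncard_add_two_le_ncard_cutEdges hcubic (Set.nonempty_of_ncard_ne_zero (by omega)) hac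
    omega
  exact h.not_ge (hcyc X (hcyclic X hX h) (hcyclic Xᶜ hXc (by rwa [cutEdges_compl])))

theorem CyclicallyFourEdgeConnected.three_le_ncard_cutEdges
    (hcyc : CyclicallyFourEdgeConnected G) (hcubic : ∀ v, G.degree v = 3) {X : Set V}
    (hX : X.Nonempty) (hXc : Xᶜ.Nonempty) : 3 ≤ (cutEdges G X).ncard := by
  rcases le_or_gt X.ncard 2 with hX2 | hX2
  · exact three_le_ncard_cutEdges_of_ncard_le_two hcubic hX hX2
  rcases le_or_gt Xᶜ.ncard 2 with hXc2 | hXc2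
  · rw [← cutEdges_compl]
    exact three_le_ncard_cutEdges_of_ncard_le_two hcubic hXc hXc2
  have := hcyc.four_le_ncard_cutEdges hcubic hX2.le hXc2.le
  omega

end Counting

theorem degree_eq_card_of_forall_adj_iff {V W : Type*} [Fintype W] {H : SimpleGraph W}
    [DecidableRel H.Adj] (f : W ↪ V) {a : W} {s : Finset V} (hs : ∀ x ∈ s, ∃ b, f b = x)
    (h : ∀ b, H.Adj a b ↔ f b ∈ s) : H.degree a = #s := by
  rw [← card_neighborFinset_eq_degree, ← card_map f]
  congr 1
  ext x
  simp only [mem_map, mem_neighborFinset, h]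
  constructor
  · rintro ⟨b, hb, rfl⟩
    exact hb
  · intro hx
    obtain ⟨b, rfl⟩ := hs x hx
    exact ⟨b, hx, rfl⟩

section CutImage

variable {V : Type*} {G : SimpleGraph V} {v2 v3 : V} {G' : SimpleGraph {v // v ≠ v2 ∧ v ≠ v3}}
  {q1 q4 q1' q4' : {v // v ≠ v2 ∧ v ≠ v3}} {X' : Set {v // v ≠ v2 ∧ v ≠ v3}}

theorem val_mem_image_union_iff (a : {v // v ≠ v2 ∧ v ≠ v3}) :
    ↑a ∈ Subtype.val '' X' ∪ {v2, v3} ↔ a ∈ X' := by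
  simp [a.2.1, a.2.2]

theorem ncard_cutEdges_image_union_le [Finite V]
    (hN2 : ∀ w, G.Adj v2 w → w = q1 ∨ w = v3 ∨ w = q1')
    (hN3 : ∀ w, G.Adj v3 w → w = v2 ∨ w = q4 ∨ w = q4') (hnadj : ¬ G.Adj q1' q4')
    (hG'G : ∀ a b : {v // v ≠ v2 ∧ v ≠ v3}, G.Adj ↑a ↑b → G'.Adj a b)
    (hq1 : q1 ∈ X') (hq4 : q4 ∈ X') :
    (cutEdges G (Subtype.val '' X' ∪ {v2, v3})).ncard ≤
      (cutEdges G' X' \ {s(q1', q4')}).ncard +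
        (cutEdges G (Subtype.val '' X' ∪ {v2, v3}) ∩ {s(v2, ↑q1'), s(v3, ↑q4')}).ncard := by
  set X : Set V := Subtype.val '' X' ∪ {v2, v3}
  refine (Set.ncard_le_ncard (t := Sym2.map Subtype.val '' (cutEdges G' X' \ {s(q1', q4')}) ∪
    (cutEdges G X ∩ {s(v2, ↑q1'), s(v3, ↑q4')})) ?_).trans <|
    (Set.ncard_union_le _ _).trans (Nat.add_le_add_right (Set.ncard_image_le (Set.toFinite _)) _)
  rintro _ ⟨he, u, w, rfl, hu, hw⟩
  have huw : G.Adj u w := he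
  have hw2 : w ≠ v2 := by rintro rfl; simp [X] at hw
  have hw3 : w ≠ v3 := by rintro rfl; simp [X] at hw
  by_cases hu2 : u = v2
  · subst hu2
    rcases hN2 w huw with rfl | rfl | rfl
    · exact absurd ((val_mem_image_union_iff q1).2 hq1) hw
    · exact absurd rfl hw3
    · exact Or.inr ⟨⟨he, _, _, rfl, hu, hw⟩, by simp⟩
  by_cases hu3 : u = v3
  · subst hu3
    rcases hN3 w huw with rfl | rfl | rfl
    · exact absurd rfl hw2
    · exact absurd ((val_mem_image_union_iff q4).2 hq4) hw
    · exact Or.inr ⟨⟨he, _, _, rfl, hu, hw⟩, by simp⟩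
  refine Or.inl ⟨s(⟨u, hu2, hu3⟩, ⟨w, hw2, hw3⟩),
    ⟨mk_mem_cutEdges_iff.2 ⟨hG'G _ _ huw, ?_⟩, ?_⟩, rfl⟩
  · rw [← val_mem_image_union_iff, ← val_mem_image_union_iff]
    tauto
  · intro h
    rcases Sym2.eq_iff.1 h with ⟨rfl, rfl⟩ | ⟨rfl, rfl⟩
    exacts [hnadj huw, hnadj huw.symm]

end CutImage

/-- `G'` is obtained from `G` by splitting along the path `v1 v2 v3 v4`, where `v1'` and `v4'` are
the third neighbours of `v2` and `v3`. -/
structure IsPathSplitting {V : Type*} (G : SimpleGraph V) (v1 v2 v3 v4 v1' v4' : V)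
    (G' : SimpleGraph {v : V // v ≠ v2 ∧ v ≠ v3}) : Prop where
  adj12 : G.Adj v1 v2
  adj23 : G.Adj v2 v3
  adj34 : G.Adj v3 v4
  ne13 : v1 ≠ v3
  ne14 : v1 ≠ v4
  ne24 : v2 ≠ v4
  adj21' : G.Adj v2 v1'
  ne1'1 : v1' ≠ v1
  ne1'3 : v1' ≠ v3
  adj34' : G.Adj v3 v4'
  ne4'2 : v4' ≠ v2
  ne4'4 : v4' ≠ v4
  not_adj14 : ¬ G.Adj v1 v4
  not_adj1'4' : ¬ G.Adj v1' v4'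
  ne1'4' : v1' ≠ v4'
  ne14' : v1 ≠ v4'
  ne41' : v4 ≠ v1'
  adj_iff : ∀ a b : {v : V // v ≠ v2 ∧ v ≠ v3},
    G'.Adj a b ↔ (G.Adj ↑a ↑b ∨ ((↑a : V) = v1 ∧ (↑b : V) = v4) ∨
      ((↑a : V) = v4 ∧ (↑b : V) = v1) ∨ ((↑a : V) = v1' ∧ (↑b : V) = v4') ∨
      ((↑a : V) = v4' ∧ (↑b : V) = v1'))

namespace IsPathSplitting

variable {V : Type*} {G : SimpleGraph V} {v1 v2 v3 v4 v1' v4' : V}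
  {G' : SimpleGraph {v : V // v ≠ v2 ∧ v ≠ v3}}

theorem swap (hS : IsPathSplitting G v1 v2 v3 v4 v1' v4' G') :
    IsPathSplitting G v1' v2 v3 v4' v1 v4 G' where
  adj12 := hS.adj21'.symm
  adj23 := hS.adj23
  adj34 := hS.adj34'
  ne13 := hS.ne1'3
  ne14 := hS.ne1'4'
  ne24 := hS.ne4'2.symm
  adj21' := hS.adj12.symm
  ne1'1 := hS.ne1'1.symm
  ne1'3 := hS.ne13
  adj34' := hS.adj34
  ne4'2 := hS.ne24.symm
  ne4'4 := hS.ne4'4.symm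
  not_adj14 := hS.not_adj1'4'
  not_adj1'4' := hS.not_adj14
  ne1'4' := hS.ne14
  ne14' := hS.ne41'.symm
  ne41' := hS.ne14'.symm
  adj_iff a b := (hS.adj_iff a b).trans (by tauto)

end IsPathSplitting

section Splitting

variable {V : Type*} [Fintype V] [DecidableEq V] {G : SimpleGraph V} [DecidableRel G.Adj]

section Cut

variable {v2 v3 : V} {G' : SimpleGraph {v // v ≠ v2 ∧ v ≠ v3}}
  {q1 q4 q1' q4' : {v // v ≠ v2 ∧ v ≠ v3}} {X' : Set {v // v ≠ v2 ∧ v ≠ v3}}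

theorem two_le_ncard_cutEdges_of_mem_iff_mem (hcyc : CyclicallyFourEdgeConnected G)
    (hcubic : ∀ v, G.degree v = 3) (hN2 : ∀ w, G.Adj v2 w → w = q1 ∨ w = v3 ∨ w = q1')
    (hN3 : ∀ w, G.Adj v3 w → w = v2 ∨ w = q4 ∨ w = q4') (h23 : v2 ≠ v3)
    (hq' : q1' ≠ q4') (hnadj : ¬ G.Adj q1' q4')
    (hG'G : ∀ a b : {v // v ≠ v2 ∧ v ≠ v3}, G.Adj ↑a ↑b → G'.Adj a b)
    (hG'q' : G'.Adj q1' q4') (hq : q1 ∈ X' ↔ q4 ∈ X') (hX : X'.Nonempty)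
    (hXc : X'ᶜ.Nonempty) :
    2 ≤ (cutEdges G' X').ncard := by
  wlog hq1 : q1 ∈ X' generalizing X'
  · rw [← cutEdges_compl]
    exact this (not_congr hq) hXc (by rwa [compl_compl]) hq1
  by_contra! hsmall
  have hle := ncard_cutEdges_image_union_le hN2 hN3 hnadj hG'G hq1 (hq.1 hq1)
  set X : Set V := Subtype.val '' X' ∪ {v2, v3}
  have hpair : (cutEdges G X ∩ {s(v2, ↑q1'), s(v3, ↑q4')}).ncard ≤ 2 :=
    (Set.ncard_le_ncard Set.inter_subset_right).trans <|
      (Set.ncard_insert_le _ _).trans (by rw [Set.ncard_singleton])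
  have h3 : 3 ≤ (cutEdges G X).ncard := by
    obtain ⟨a, ha⟩ := hXc
    exact hcyc.three_le_ncard_cutEdges hcubic ⟨v2, by simp [X]⟩
      ⟨a, (val_mem_image_union_iff a).not.2 ha⟩
  by_cases hcross : s(q1', q4') ∈ cutEdges G' X'
  · rw [Set.ncard_sdiff_singleton_of_mem hcross] at hle
    omega
  have hdiff : (cutEdges G' X' \ {s(q1', q4')}).ncard ≤ 1 :=
    (Set.ncard_le_ncard Set.sdiff_subset).trans (by omega)
  rw [mk_mem_cutEdges_iff, not_and, not_not] at hcross
  by_cases hq1' : q1' ∈ X'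
  · have hq4' := (hcross hG'q').1 hq1'
    have hin : cutEdges G X ∩ {s(v2, ↑q1'), s(v3, ↑q4')} = ∅ := by
      refine Set.eq_empty_of_forall_notMem fun e ⟨he, he'⟩ => ?_
      rcases he' with rfl | rfl <;> rw [mk_mem_cutEdges_iff] at he
      · exact he.2 (iff_of_true (by simp [X]) ((val_mem_image_union_iff _).2 hq1'))
      · exact he.2 (iff_of_true (by simp [X]) ((val_mem_image_union_iff _).2 hq4'))
    rw [hin, Set.ncard_empty] at hle
    omega
  · have hq4' : q4' ∉ X' := fun h => hq1' ((hcross hG'q').2 h)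
    have h4 : 4 ≤ (cutEdges G X).ncard := hcyc.four_le_ncard_cutEdges hcubic
      ((Set.ncard_pair h23).symm.le.trans (Set.ncard_le_ncard (by simp [X, Set.pair_subset_iff])))
      ((Set.ncard_pair (Subtype.coe_injective.ne hq')).symm.le.trans (Set.ncard_le_ncard
        (Set.pair_subset ((val_mem_image_union_iff _).not.2 hq1')
          ((val_mem_image_union_iff _).not.2 hq4'))))
    omega

end Cut

theorem degree_eq_three_of_forall_adj_iff (hcubic : ∀ v, G.degree v = 3) {v2 v3 : V}
    {G' : SimpleGraph {v // v ≠ v2 ∧ v ≠ v3}} [DecidableRel G'.Adj]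
    {a : {v // v ≠ v2 ∧ v ≠ v3}} {m w : V} (ham : G.Adj a m) (haw : ¬ G.Adj a w)
    (hw : w ≠ v2 ∧ w ≠ v3) (hN : ∀ x, G.Adj a x → x ≠ m → x ≠ v2 ∧ x ≠ v3)
    (h : ∀ b, G'.Adj a b ↔ ↑b = w ∨ ↑b ≠ m ∧ G.Adj a b) :
    G'.degree a = 3 := by
  rw [degree_eq_card_of_forall_adj_iff (.subtype _)
    (s := insert w ((G.neighborFinset a).erase m)) ?_ fun b => by simp [h b],
    card_insert_of_notMem (by simp [haw]), card_erase_of_mem (by simpa),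
    card_neighborFinset_eq_degree, hcubic]
  simp only [mem_insert, mem_erase, mem_neighborFinset]
  rintro x (rfl | ⟨hxm, hx⟩)
  exacts [⟨⟨x, hw⟩, rfl⟩, ⟨⟨x, hN x hx hxm⟩, rfl⟩]

namespace IsPathSplitting

variable {v1 v2 v3 v4 v1' v4' : V} {G' : SimpleGraph {v : V // v ≠ v2 ∧ v ≠ v3}}
  (hS : IsPathSplitting G v1 v2 v3 v4 v1' v4' G')
include hS

theorem eq_or_eq_or_eq_of_adj_v2 (hcubic : ∀ v, G.degree v = 3) {w : V} (hw : G.Adj v2 w) :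
    w = v1 ∨ w = v3 ∨ w = v1' :=
  eq_or_eq_or_eq_of_adj_of_degree_eq_three (hcubic v2) hS.adj12.symm hS.adj23 hS.adj21' hS.ne13
    hS.ne1'1.symm hS.ne1'3.symm hw

theorem eq_or_eq_or_eq_of_adj_v3 (hcubic : ∀ v, G.degree v = 3) {w : V} (hw : G.Adj v3 w) :
    w = v2 ∨ w = v4 ∨ w = v4' :=
  eq_or_eq_or_eq_of_adj_of_degree_eq_three (hcubic v3) hS.adj23.symm hS.adj34 hS.adj34' hS.ne24
    hS.ne4'2.symm hS.ne4'4.symm hw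

theorem two_le_ncard_cutEdges (hcyc : CyclicallyFourEdgeConnected G)
    (hcubic : ∀ v, G.degree v = 3)
    {X' : Set {v : V // v ≠ v2 ∧ v ≠ v3}} (hX : X'.Nonempty) (hXc : X'ᶜ.Nonempty) :
    2 ≤ (cutEdges G' X').ncard := by
  set q1 : {v : V // v ≠ v2 ∧ v ≠ v3} := ⟨v1, hS.adj12.ne, hS.ne13⟩
  set q4 : {v : V // v ≠ v2 ∧ v ≠ v3} := ⟨v4, hS.ne24.symm, hS.adj34.ne'⟩
  set q1' : {v : V // v ≠ v2 ∧ v ≠ v3} := ⟨v1', hS.adj21'.ne', hS.ne1'3⟩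
  set q4' : {v : V // v ≠ v2 ∧ v ≠ v3} := ⟨v4', hS.ne4'2, hS.adj34'.ne'⟩
  have hG'G (a b : {v : V // v ≠ v2 ∧ v ≠ v3}) (h : G.Adj a b) : G'.Adj a b :=
    (hS.adj_iff a b).2 (Or.inl h)
  have hq14 : G'.Adj q1 q4 := (hS.adj_iff _ _).2 (by simp [q1, q4])
  have hq1'4' : G'.Adj q1' q4' := (hS.adj_iff _ _).2 (by simp [q1', q4'])
  have hN2 w (hw : G.Adj v2 w) := hS.eq_or_eq_or_eq_of_adj_v2 hcubic hw
  have hN3 w (hw : G.Adj v3 w) := hS.eq_or_eq_or_eq_of_adj_v3 hcubic hw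
  by_contra! hsmall
  have hne : s(q1, q4) ≠ s(q1', q4') := by
    simp [q1, q4, q1', q4', hS.ne1'1.symm, hS.ne14']
  have hnot : ¬ (s(q1, q4) ∈ cutEdges G' X' ∧ s(q1', q4') ∈ cutEdges G' X') := fun h =>
    hsmall.not_ge ((Set.one_lt_ncard_iff).2 ⟨_, _, h.1, h.2, hne⟩)
  simp only [mk_mem_cutEdges_iff, hq14, hq1'4', true_and] at hnot
  rcases not_and_or.1 hnot with h | h
  · exact hsmall.not_ge <| two_le_ncard_cutEdges_of_mem_iff_mem (q1 := q1) (q4 := q4)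
      (q1' := q1') (q4' := q4') hcyc hcubic hN2 hN3
      hS.adj23.ne (by simp [q1', q4', hS.ne1'4']) hS.not_adj1'4' hG'G hq1'4' (not_not.1 h) hX hXc
  · exact hsmall.not_ge <| two_le_ncard_cutEdges_of_mem_iff_mem (q1 := q1') (q4 := q4')
      (q1' := q1) (q4' := q4) hcyc hcubic
      (fun w hw => by rcases hN2 w hw with h | h | h <;> simp [h, q1, q1'])
      (fun w hw => by rcases hN3 w hw with h | h | h <;> simp [h, q4, q4'])
      hS.adj23.ne (by simp [q1, q4, hS.ne14]) hS.not_adj14 hG'G hq14 (not_not.1 h) hX hXc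

variable [DecidableRel G'.Adj]

theorem degree_eq_three_of_val_eq_v1 (hcubic : ∀ v, G.degree v = 3)
    {a : {v : V // v ≠ v2 ∧ v ≠ v3}} (ha : ↑a = v1) : G'.degree a = 3 := by
  obtain ⟨u, hu2, hu3⟩ := a
  subst ha
  refine degree_eq_three_of_forall_adj_iff hcubic hS.adj12 hS.not_adj14
    ⟨hS.ne24.symm, hS.adj34.ne'⟩ (fun x hx hx2 => ⟨hx2, ?_⟩) fun b => ?_
  · rintro rfl
    rcases hS.eq_or_eq_or_eq_of_adj_v3 hcubic hx.symm with h | h | h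
    exacts [hu2 h, hS.ne14 h, hS.ne14' h]
  · simp [hS.adj_iff, hS.ne14, hS.ne1'1.symm, hS.ne14', b.2.1]
    tauto

theorem degree_eq_three_of_val_eq_v4 (hcubic : ∀ v, G.degree v = 3)
    {a : {v : V // v ≠ v2 ∧ v ≠ v3}} (ha : ↑a = v4) : G'.degree a = 3 := by
  obtain ⟨u, hu2, hu3⟩ := a
  subst ha
  refine degree_eq_three_of_forall_adj_iff hcubic hS.adj34.symm (fun h => hS.not_adj14 h.symm)
    ⟨hS.adj12.ne, hS.ne13⟩ (fun x hx hx3 => ⟨?_, hx3⟩) fun b => ?_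
  · rintro rfl
    rcases hS.eq_or_eq_or_eq_of_adj_v2 hcubic hx.symm with h | h | h
    exacts [hS.ne14 h.symm, hu3 h, hS.ne41' h]
  · simp [hS.adj_iff, hS.ne14.symm, hS.ne41', hS.ne4'4.symm, b.2.2]
    tauto

theorem degree_eq_three (hcubic : ∀ v, G.degree v = 3) (a : {v : V // v ≠ v2 ∧ v ≠ v3}) :
    G'.degree a = 3 := by
  by_cases h1 : ↑a = v1
  · exact hS.degree_eq_three_of_val_eq_v1 hcubic h1
  by_cases h4 : ↑a = v4
  · exact hS.degree_eq_three_of_val_eq_v4 hcubic h4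
  by_cases h1' : ↑a = v1'
  · exact hS.swap.degree_eq_three_of_val_eq_v1 hcubic h1'
  by_cases h4' : ↑a = v4'
  · exact hS.swap.degree_eq_three_of_val_eq_v4 hcubic h4'
  refine (degree_eq_card_of_forall_adj_iff (.subtype _) (s := G.neighborFinset a) ?_
    fun b => by simp [hS.adj_iff, h1, h4, h1', h4']).trans
    (by rw [card_neighborFinset_eq_degree, hcubic])
  intro x hx
  rw [mem_neighborFinset] at hx
  refine ⟨⟨x, ?_, ?_⟩, rfl⟩
  · rintro rfl
    rcases hS.eq_or_eq_or_eq_of_adj_v2 hcubic hx.symm with h | h | h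
    exacts [h1 h, a.2.2 h, h1' h]
  · rintro rfl
    rcases hS.eq_or_eq_or_eq_of_adj_v3 hcubic hx.symm with h | h | h
    exacts [a.2.1 h, h4 h, h4' h]

end IsPathSplitting

end Splitting

theorem statement12_general {V : Type*} [Fintype V] [DecidableEq V]
    (G : SimpleGraph V) [DecidableRel G.Adj]
    (hcubic : ∀ v : V, G.degree v = 3)
    (hcyc : CyclicallyFourEdgeConnected G)
    (v1 v2 v3 v4 v1' v4' : V)
    -- v1 v2 v3 v4 is a path in G (four distinct vertices)
    (h12 : G.Adj v1 v2) (h23 : G.Adj v2 v3) (h34 : G.Adj v3 v4)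
    (hne13 : v1 ≠ v3) (hne14 : v1 ≠ v4) (hne24 : v2 ≠ v4)
    -- v1' is the neighbor of v2 other than v1 and v3
    (h2v1' : G.Adj v2 v1') (hv1'1 : v1' ≠ v1) (hv1'3 : v1' ≠ v3)
    -- v4' is the neighbor of v3 other than v2 and v4
    (h3v4' : G.Adj v3 v4') (hv4'2 : v4' ≠ v2) (hv4'4 : v4' ≠ v4)
    -- extra assumptions
    (hnadj14 : ¬ G.Adj v1 v4) (hnadj1'4' : ¬ G.Adj v1' v4')
    -- v1, v4, v1', v4' are four distinct vertices
    (hne1'4' : v1' ≠ v4') (hne14' : v1 ≠ v4')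
    (hne41' : v4 ≠ v1')
    -- G' is the graph obtained from G by splitting along the path v1 v2 v3 v4
    (G' : SimpleGraph {v : V // v ≠ v2 ∧ v ≠ v3}) [DecidableRel G'.Adj]
    (hG' : ∀ a b : {v : V // v ≠ v2 ∧ v ≠ v3},
      G'.Adj a b ↔ (G.Adj ↑a ↑b ∨ ((↑a : V) = v1 ∧ (↑b : V) = v4) ∨
        ((↑a : V) = v4 ∧ (↑b : V) = v1) ∨ ((↑a : V) = v1' ∧ (↑b : V) = v4') ∨
        ((↑a : V) = v4' ∧ (↑b : V) = v1'))) :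
    (∀ v, G'.degree v = 3) ∧ G'.Connected ∧ ∀ e ∈ G'.edgeSet, ¬ G'.IsBridge e := by
  have hS : IsPathSplitting G v1 v2 v3 v4 v1' v4' G' := ⟨h12, h23, h34, hne13, hne14, hne24,
    h2v1', hv1'1, hv1'3, h3v4', hv4'2, hv4'4, hnadj14, hnadj1'4', hne1'4', hne14', hne41', hG'⟩
  have hcut (X : Set _) (hX : X.Nonempty) (hXc : Xᶜ.Nonempty) : 2 ≤ (cutEdges G' X).ncard :=
    hS.two_le_ncard_cutEdges hcyc hcubic hX hXc
  have : Nonempty {v : V // v ≠ v2 ∧ v ≠ v3} := ⟨⟨v1, h12.ne, hne13⟩⟩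
  refine ⟨hS.degree_eq_three hcubic, ?_, fun e _ => ?_⟩
  · refine connected_of_forall_cutEdges_nonempty fun X hX hXc => ?_
    exact Set.nonempty_of_ncard_ne_zero (by have := hcut X hX hXc; omega)
  · exact not_isBridge_of_forall_one_lt_ncard_cutEdges hcut e

theorem statement12 {V : Type*} [Fintype V] [DecidableEq V]
    (G : SimpleGraph V) [DecidableRel G.Adj]
    (hcubic : ∀ v : V, G.degree v = 3)
    (hcyc : CyclicallyFourEdgeConnected G)
    (hcard : 6 ≤ Fintype.card V)
    (v1 v2 v3 v4 v1' v4' : V)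
    -- v1 v2 v3 v4 is a path in G (four distinct vertices)
    (h12 : G.Adj v1 v2) (h23 : G.Adj v2 v3) (h34 : G.Adj v3 v4)
    (hne13 : v1 ≠ v3) (hne14 : v1 ≠ v4) (hne24 : v2 ≠ v4)
    -- v1' is the neighbor of v2 other than v1 and v3
    (h2v1' : G.Adj v2 v1') (hv1'1 : v1' ≠ v1) (hv1'3 : v1' ≠ v3)
    -- v4' is the neighbor of v3 other than v2 and v4
    (h3v4' : G.Adj v3 v4') (hv4'2 : v4' ≠ v2) (hv4'4 : v4' ≠ v4)
    -- extra assumptions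
    (hnadj14 : ¬ G.Adj v1 v4) (hnadj1'4' : ¬ G.Adj v1' v4')
    -- v1, v4, v1', v4' are four distinct vertices
    (hne1'4' : v1' ≠ v4') (hne11' : v1 ≠ v1') (hne14' : v1 ≠ v4')
    (hne44' : v4 ≠ v4') (hne41' : v4 ≠ v1')
    -- G' is the graph obtained from G by splitting along the path v1 v2 v3 v4
    (G' : SimpleGraph {v : V // v ≠ v2 ∧ v ≠ v3}) [DecidableRel G'.Adj]
    (hG' : ∀ a b : {v : V // v ≠ v2 ∧ v ≠ v3},
      G'.Adj a b ↔ (G.Adj ↑a ↑b ∨ ((↑a : V) = v1 ∧ (↑b : V) = v4) ∨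
        ((↑a : V) = v4 ∧ (↑b : V) = v1) ∨ ((↑a : V) = v1' ∧ (↑b : V) = v4') ∨
        ((↑a : V) = v4' ∧ (↑b : V) = v1'))) :
    (∀ v, G'.degree v = 3) ∧ G'.Connected ∧ ∀ e ∈ G'.edgeSet, ¬ G'.IsBridge e :=
  statement12_general G hcubic hcyc v1 v2 v3 v4 v1' v4' h12 h23 h34 hne13 hne14 hne24 h2v1' hv1'1
    hv1'3 h3v4' hv4'2 hv4'4 hnadj14 hnadj1'4' hne1'4' hne14' hne41' G' hG'
end
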